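/- For the eta-quotient θ₁(z) = η(z)²/η(2z), the q-expansion identity θ₁(z) = Σ_{n∈ℤ} (−1)ⁿ q^{n²} holds as an identity of formal power series; in particular, the coefficient of qᵏ is 2(−1)^m if k = m² for some m ≥ 1, 1 if k = 0, and 0 otherwise. -/

import Mathlib

open PowerSeries

namespace ThetaAux
noncomputable section
open Finset





/-- Gaussian binomial coefficient in the variable `X²`, as an integer power series. -/
def qb : ℕ → ℕ → PowerSeries ℤ
  | 0, 0 => 1
  | 0, _+1 => 0
  | _+1, 0 => 1
  | n+1, k+1 => qb n k + X ^ (2*(k+1)) * qb n (k+1)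

lemma qb_zero_right (n : ℕ) : qb n 0 = 1 := by cases n <;> rfl

lemma qb_succ_succ (n k : ℕ) :
    qb (n+1) (k+1) = qb n k + X ^ (2*(k+1)) * qb n (k+1) := rfl

lemma qb_eq_zero : ∀ {n k : ℕ}, n < k → qb n k = 0
  | 0, _+1, _ => rfl
  | n+1, k+1, h => by
      rw [qb_succ_succ, qb_eq_zero (by omega), qb_eq_zero (by omega)]
      ring

lemma qb_self : ∀ n : ℕ, qb n n = 1
  | 0 => rfl
  | n+1 => by rw [qb_succ_succ, qb_self n, qb_eq_zero (by omega)]; ring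

lemma qb_geom (n : ℕ) : ((X:PowerSeries ℤ)^2 - 1) * qb n 1 = X^(2*n) - 1 := by
  induction n with
  | zero => simp [qb]
  | succ n ih =>
      rw [show qb (n+1) 1 = qb n 0 + X ^ (2*1) * qb n 1 from rfl, qb_zero_right]
      linear_combination (X:PowerSeries ℤ)^2 * ih


lemma qb_pascal₂ : ∀ n k : ℕ, k ≤ n →
    qb (n+1) (k+1) = X ^ (2*(n-k)) * qb n k + qb n (k+1) := by
  intro n
  induction n with
  | zero =>
      intro k hk
      interval_cases k
      simp [qb]
  | succ n ih =>
      intro k hk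
      match k, hk with
      | 0, _ =>
          have hg := qb_geom (n+1)
          rw [show (n+1) - 0 = n+1 by omega, qb_zero_right]
          rw [show qb (n+2) (0+1) = qb (n+1) 0 + X ^ (2*(0+1)) * qb (n+1) 1 from rfl,
            qb_zero_right]
          linear_combination hg
      | b+1, hk =>
          rcases Nat.lt_or_ge b n with hb | hb
          · -- b + 1 ≤ n
            obtain ⟨d, rfl⟩ : ∃ d, n = b + 1 + d := ⟨n - (b+1), by omega⟩
            have ih1 := ih b (by omega)
            have ih2 := ih (b+1) (by omega)
            rw [show b+1+d - b = d+1 by omega] at ih1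
            rw [show b+1+d - (b+1) = d by omega] at ih2
            rw [show b+1+d+1 - (b+1) = d+1 by omega]
            have def2 := qb_succ_succ (b+1+d+1) (b+1)
            have def1 := qb_succ_succ (b+d+1) (b)
            have defb2 := qb_succ_succ (b+d+1) (b+1)
            rw [show b+1+d = b+d+1 by omega] at ih1 ih2 def2 ⊢
            linear_combination def2 + ih1 + X^(2*(b+2)) * ih2 - X^(2*(d+1)) * def1 - defb2
          · -- b = n
            obtain rfl : b = n := by omega
            rw [show b+1 - (b+1) = 0 by omega, pow_zero, one_mul, qb_self,
              qb_eq_zero (by omega : b+1 < b+2), qb_succ_succ, qb_self,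
              qb_eq_zero (by omega : b < b+1)]
            ring


/-- truncated product `∏_{i=1}^{t}(1 - X^{2i})`. -/
def Ev (t : ℕ) : PowerSeries ℤ := ∏ i ∈ range t, (1 - X ^ (2*(i+1)))

lemma Ev_zero : Ev 0 = 1 := rfl

lemma Ev_succ (t : ℕ) : Ev (t+1) = Ev t * (1 - X ^ (2*(t+1))) := prod_range_succ _ _

lemma qb_mul_Ev : ∀ m a : ℕ, a ≤ m → qb m a * Ev a * Ev (m - a) = Ev m := by
  intro m
  induction m with
  | zero => intro a ha; interval_cases a; simp [qb, Ev]
  | succ m ih =>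
      intro a ha
      match a, ha with
      | 0, _ => rw [qb_zero_right, Ev_zero]; simp
      | b+1, ha =>
          rcases Nat.lt_or_ge b m with hb | hb
          · obtain ⟨d, rfl⟩ : ∃ d, m = b + 1 + d := ⟨m - (b+1), by omega⟩
            have F1 := ih b (by omega)
            have F2 := ih (b+1) (by omega)
            rw [show b+1+d - b = d+1 by omega] at F1
            rw [show b+1+d - (b+1) = d by omega] at F2
            rw [show b+1+d+1 - (b+1) = d+1 by omega]
            rw [qb_succ_succ, Ev_succ b, Ev_succ d, Ev_succ (b+1+d)]
            rw [Ev_succ b] at F2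
            rw [Ev_succ d] at F1
            linear_combination (1 - X^(2*(b+1))) * F1 + X^(2*(b+1)) * (1 - X^(2*(d+1))) * F2
          · obtain rfl : b = m := by omega
            rw [qb_self, show b+1 - (b+1) = 0 by omega, Ev_zero]; ring

/-- `(j - N)²` as a natural number. -/
def e (j N : ℕ) : ℕ := (((j:ℤ) - N)^2).toNat

lemma e_cast (j N : ℕ) : ((e j N : ℤ)) = ((j:ℤ) - N)^2 := Int.toNat_of_nonneg (sq_nonneg _)

lemma eA (i N : ℕ) (h : i ≤ 2*N) : e (i+1) N + 2*(2*N - i) = e i N + (2*N+1) := by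
  zify [h]
  rw [e_cast, e_cast]; push_cast; ring

lemma eB1 (i N : ℕ) : e (i+1) (N+1) = e i N := by
  have h : ((e (i+1) (N+1) : ℤ)) = ((e i N : ℤ)) := by rw [e_cast, e_cast]; push_cast; ring
  exact_mod_cast h

lemma eB2 (j N : ℕ) : e j (N+1) + 2*j = e j N + (2*N+1) := by
  zify
  rw [e_cast, e_cast]; push_cast; ring

def Tser (N : ℕ) : PowerSeries ℤ :=
  ∑ j ∈ range (2*N+1), (-1)^(j+N) * X^(e j N) * qb (2*N) j

def Vser (N : ℕ) : PowerSeries ℤ :=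
  ∑ j ∈ range (2*N+2), (-1)^(j+N) * X^(e j N) * qb (2*N+1) j

lemma claimA (N : ℕ) : Vser N = (1 - X^(2*N+1)) * Tser N := by
  have key : ∀ i ∈ range (2*N+1),
      ((-1 : PowerSeries ℤ)^(i+1+N) * X^(e (i+1) N) * qb (2*N+1) (i+1))
      = -(X^(2*N+1)) * ((-1)^(i+N) * X^(e i N) * qb (2*N) i)
        + (-1)^(i+1+N) * X^(e (i+1) N) * qb (2*N) (i+1) := by
    intro i hi
    simp only [mem_range] at hi
    have P := qb_pascal₂ (2*N) i (by omega)
    have hx : (X:PowerSeries ℤ)^(e (i+1) N) * X^(2*(2*N - i)) = X^(2*N+1) * X^(e i N) := by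
      rw [← pow_add, ← pow_add]
      exact congrArg (X ^ ·) (by have := eA i N (by omega); omega)
    linear_combination ((-1:PowerSeries ℤ))^(i+1+N) * X^(e (i+1) N) * P
      + ((-1:PowerSeries ℤ))^(i+1+N) * qb (2*N) i * hx
  have h1 : Vser N = (∑ i ∈ range (2*N+1),
      ((-1 : PowerSeries ℤ)^(i+1+N) * X^(e (i+1) N) * qb (2*N+1) (i+1)))
      + (-1)^(0+N) * X^(e 0 N) * qb (2*N+1) 0 := by
    rw [Vser, Finset.sum_range_succ']
  rw [h1, Finset.sum_congr rfl key, Finset.sum_add_distrib]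
  have h2 : (∑ i ∈ range (2*N+1),
      -(X:PowerSeries ℤ)^(2*N+1) * ((-1)^(i+N) * X^(e i N) * qb (2*N) i))
      = -(X^(2*N+1)) * Tser N := by
    rw [Tser, Finset.mul_sum]
  have h3 : (∑ i ∈ range (2*N+1),
      ((-1:PowerSeries ℤ))^(i+1+N) * X^(e (i+1) N) * qb (2*N) (i+1))
      + (-1)^(0+N) * X^(e 0 N) * qb (2*N+1) 0 = Tser N := by
    have hs := Finset.sum_range_succ'
      (fun j => ((-1:PowerSeries ℤ))^(j+N) * X^(e j N) * qb (2*N) j) (2*N+1)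
    have hs2 := Finset.sum_range_succ
      (fun j => ((-1:PowerSeries ℤ))^(j+N) * X^(e j N) * qb (2*N) j) (2*N+1)
    have hz : qb (2*N) (2*N+1) = 0 := qb_eq_zero (by omega)
    have h0 : qb (2*N+1) 0 = (1:PowerSeries ℤ) := qb_zero_right _
    have h0' : qb (2*N) 0 = (1:PowerSeries ℤ) := qb_zero_right _
    rw [Tser]
    linear_combination hs2 - hs + ((-1:PowerSeries ℤ))^(2*N+1+N) * X^(e (2*N+1) N) * hz
      + ((-1:PowerSeries ℤ))^(0+N) * X^(e 0 N) * (h0 - h0')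
  linear_combination h2 + h3

lemma claimB (N : ℕ) : Tser (N+1) = (1 - X^(2*N+1)) * Vser N := by
  have key : ∀ i ∈ range (2*N+2),
      ((-1 : PowerSeries ℤ)^(i+1+(N+1)) * X^(e (i+1) (N+1)) * qb (2*(N+1)) (i+1))
      = ((-1)^(i+N) * X^(e i N) * qb (2*N+1) i)
        + -(X^(2*N+1)) * ((-1)^(i+1+N) * X^(e (i+1) N) * qb (2*N+1) (i+1)) := by
    intro i hi
    have P : qb (2*(N+1)) (i+1) = qb (2*N+1) i + X ^ (2*(i+1)) * qb (2*N+1) (i+1) := by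
      rw [show 2*(N+1) = (2*N+1)+1 by ring, qb_succ_succ]
    have hx : (X:PowerSeries ℤ)^(e (i+1) (N+1)) * X^(2*(i+1)) = X^(2*N+1) * X^(e (i+1) N) := by
      rw [← pow_add, ← pow_add]
      exact congrArg (X ^ ·) (by have := eB2 (i+1) N; omega)
    have he1 : e (i+1) (N+1) = e i N := eB1 i N
    rw [P, he1]
    rw [he1] at hx
    linear_combination ((-1:PowerSeries ℤ))^(i+N) * qb (2*N+1) (i+1) * hx
  have h1 : Tser (N+1) = (∑ i ∈ range (2*N+2),
      ((-1 : PowerSeries ℤ)^(i+1+(N+1)) * X^(e (i+1) (N+1)) * qb (2*(N+1)) (i+1)))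
      + (-1)^(0+(N+1)) * X^(e 0 (N+1)) * qb (2*(N+1)) 0 := by
    rw [Tser, show 2*(N+1)+1 = (2*N+2)+1 by ring, Finset.sum_range_succ',
      show 2*N+2 = 2*(N+1) by ring]
  rw [h1, Finset.sum_congr rfl key, Finset.sum_add_distrib]
  have hmul : (∑ i ∈ range (2*N+2),
      -(X:PowerSeries ℤ)^(2*N+1) * ((-1)^(i+1+N) * X^(e (i+1) N) * qb (2*N+1) (i+1)))
      = -(X^(2*N+1)) * ∑ i ∈ range (2*N+2),
          ((-1:PowerSeries ℤ))^(i+1+N) * X^(e (i+1) N) * qb (2*N+1) (i+1) :=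
    (Finset.mul_sum _ _ _).symm
  have hst := Finset.sum_range_succ'
    (fun j => ((-1:PowerSeries ℤ))^(j+N) * X^(e j N) * qb (2*N+1) j) (2*N+2)
  have hst2 := Finset.sum_range_succ
    (fun j => ((-1:PowerSeries ℤ))^(j+N) * X^(e j N) * qb (2*N+1) j) (2*N+2)
  have hz : qb (2*N+1) (2*N+2) = 0 := qb_eq_zero (by omega)
  have hx0 : (X:PowerSeries ℤ)^(e 0 (N+1)) = X^(2*N+1) * X^(e 0 N) := by
    rw [← pow_add]
    exact congrArg (X ^ ·) (by have := eB2 0 N; omega)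
  have hf0 : ((-1:PowerSeries ℤ))^(0+(N+1)) * X^(e 0 (N+1)) * qb (2*(N+1)) 0
      = -(X^(2*N+1)) * (((-1:PowerSeries ℤ))^(0+N) * X^(e 0 N) * qb (2*N+1) 0) := by
    rw [qb_zero_right, qb_zero_right, hx0]; ring
  have hV : Vser N = ∑ j ∈ range (2*N+2),
      ((-1:PowerSeries ℤ))^(j+N) * X^(e j N) * qb (2*N+1) j := by rw [Vser]
  linear_combination hmul + hf0 + (X:PowerSeries ℤ)^(2*N+1) * hst
    - (X:PowerSeries ℤ)^(2*N+1) * hst2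
    - (X:PowerSeries ℤ)^(2*N+1) * ((-1:PowerSeries ℤ))^(2*N+2+N) * X^(e (2*N+2) N) * hz
    - (1 - (X:PowerSeries ℤ)^(2*N+1)) * hV

def Od (N : ℕ) : PowerSeries ℤ := ∏ n ∈ range N, (1 - X ^ (2*n+1))

lemma Tser_eq (N : ℕ) : Tser N = Od N ^ 2 := by
  induction N with
  | zero =>
      rw [Tser, Od]
      simp [show e 0 0 = 0 from rfl, qb_zero_right]
  | succ N ih =>
      have hA := claimA N
      have hB := claimB N
      rw [Od, prod_range_succ, ← Od]
      rw [hB, hA, ih]; ring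

lemma isUnit_one_sub_X_pow (n : ℕ) (hn : 0 < n) : IsUnit (1 - X ^ n : PowerSeries ℤ) := by
  rw [PowerSeries.isUnit_iff_constantCoeff]
  simp [constantCoeff_X, zero_pow (by omega : n ≠ 0)]

lemma isUnit_Ev (t : ℕ) : IsUnit (Ev t) := by
  rw [Ev]
  induction (range t) using Finset.cons_induction with
  | empty => simp
  | cons a s ha ih =>
      rw [prod_cons]
      exact (isUnit_one_sub_X_pow _ (by omega)).mul ih

lemma dvd_prod_sub_one {s : Finset ℕ} {f : ℕ → PowerSeries ℤ} {t : ℕ}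
    (h : ∀ i ∈ s, X ^ t ∣ f i - 1) : X ^ t ∣ (∏ i ∈ s, f i) - 1 := by
  induction s using Finset.cons_induction with
  | empty => simp
  | cons a s ha ih =>
      rw [prod_cons]
      have h1 := h a (mem_cons_self a s)
      have h2 := ih (fun i hi => h i (mem_cons_of_mem hi))
      have : f a * ∏ i ∈ s, f i - 1
          = (f a - 1) * ∏ i ∈ s, f i + ((∏ i ∈ s, f i) - 1) := by ring
      rw [this]
      exact dvd_add (h1.mul_right _) h2

lemma Ev_split (a d : ℕ) : ∃ B, Ev (a+d) = Ev a * B ∧ X ^ (2*a+2) ∣ B - 1 := by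
  refine ⟨∏ i ∈ range d, (1 - X ^ (2*(a+i+1))), ?_, ?_⟩
  · rw [Ev, Ev, prod_range_add]
  · refine dvd_prod_sub_one (fun i _ => ?_)
    exact ⟨-(X ^ (2*i)), by ring⟩


lemma key_cong (K j : ℕ) (hj : j ≤ 2*K) :
    X ^ (2 * (min j (2*K - j)) + 2) ∣ qb (2*K) j * Ev K - 1 := by
  set μ := min j (2*K - j) with hμ
  have hμj : μ ≤ j := min_le_left _ _
  have hμj' : μ ≤ 2*K - j := min_le_right _ _
  have hμK : μ ≤ K := by omega
  obtain ⟨B1, hB1, hB1'⟩ := Ev_split μ (j - μ)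
  rw [show μ + (j - μ) = j by omega] at hB1
  obtain ⟨B2, hB2, hB2'⟩ := Ev_split μ ((2*K - j) - μ)
  rw [show μ + ((2*K - j) - μ) = 2*K - j by omega] at hB2
  obtain ⟨B3, hB3, hB3'⟩ := Ev_split μ (2*K - μ)
  rw [show μ + (2*K - μ) = 2*K by omega] at hB3
  obtain ⟨B4, hB4, hB4'⟩ := Ev_split μ (K - μ)
  rw [show μ + (K - μ) = K by omega] at hB4
  have hid := qb_mul_Ev (2*K) j hj
  rw [hB1, hB2, hB3] at hid
  have hu := isUnit_Ev μ
  have hcan : qb (2*K) j * Ev μ * B1 * B2 = B3 := by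
    apply hu.mul_left_cancel
    linear_combination hid
  have h12 : X ^ (2*μ+2) ∣ B1 * B2 - 1 := by
    have h : B1 * B2 - 1 = (B1 - 1) * B2 + (B2 - 1) := by ring
    rw [h]; exact dvd_add (hB1'.mul_right _) hB2'
  have hc : X ^ (2*μ+2) ∣ qb (2*K) j * Ev μ - 1 := by
    have heq : qb (2*K) j * Ev μ - 1
        = (B3 - 1) - (qb (2*K) j * Ev μ) * (B1 * B2 - 1) := by linear_combination hcan
    rw [heq]; exact dvd_sub hB3' (h12.mul_left _)
  have heq2 : qb (2*K) j * Ev K - 1 = (qb (2*K) j * Ev μ - 1) * B4 + (B4 - 1) := by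
    rw [hB4]; ring
  rw [heq2]; exact dvd_add (hc.mul_right _) hB4'

lemma bound (k j : ℕ) (hj : j ≤ 2*(k+1)) :
    k+1 ≤ e j (k+1) + (2 * (min j (2*(k+1) - j)) + 2) := by
  have he := e_cast j (k+1)
  rcases le_total j (k+1) with h | h
  · rw [show min j (2*(k+1) - j) = j by omega]
    zify
    rw [he]
    push_cast
    nlinarith [sq_nonneg ((j:ℤ) - (k+1) + 1)]
  · rw [show min j (2*(k+1) - j) = 2*(k+1) - j by omega]
    zify [hj]
    rw [he]
    push_cast
    nlinarith [sq_nonneg ((j:ℤ) - (k+1) - 1)]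

def Th (K : ℕ) : PowerSeries ℤ := ∑ j ∈ range (2*K+1), (-1)^(j+K) * X^(e j K)

lemma L4 (k : ℕ) : X^(k+1) ∣ Tser (k+1) * Ev (k+1) - Th (k+1) := by
  have hrw : Tser (k+1) * Ev (k+1) - Th (k+1)
      = ∑ j ∈ range (2*(k+1)+1),
          ((-1)^(j+(k+1)) * X^(e j (k+1))) * (qb (2*(k+1)) j * Ev (k+1) - 1) := by
    rw [Tser, Th, Finset.sum_mul, ← Finset.sum_sub_distrib]
    exact Finset.sum_congr rfl (fun j hj => by ring)
  rw [hrw]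
  refine Finset.dvd_sum (fun j hj => ?_)
  simp only [mem_range] at hj
  obtain ⟨g, hg⟩ := key_cong (k+1) j (by omega)
  refine (pow_dvd_pow X (bound k j (by omega))).trans
    ⟨(-1)^(j+(k+1)) * g, ?_⟩
  linear_combination ((-1:PowerSeries ℤ))^(j+(k+1)) * X^(e j (k+1)) * hg

lemma coeff_Th (k m : ℕ) (hm : m ≤ k) :
    (PowerSeries.coeff (R := ℤ) m) (Th (k+1))
      = if m = 0 then 1 else if IsSquare m then 2 * (-1)^(Nat.sqrt m) else 0 := by
  have hcoeff : (coeff (R := ℤ) m) (Th (k+1))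
      = ∑ j ∈ range (2*(k+1)+1), (if e j (k+1) = m then ((-1:ℤ))^(j+(k+1)) else 0) := by
    rw [Th, map_sum]
    refine Finset.sum_congr rfl (fun j hj => ?_)
    have hC : ((-1 : PowerSeries ℤ))^(j+(k+1)) * X^(e j (k+1))
        = C (R := ℤ) ((-1)^(j+(k+1))) * X^(e j (k+1)) := by
      simp [map_pow, map_neg, map_one]
    rw [hC, coeff_C_mul, coeff_X_pow]
    by_cases hh : e j (k+1) = m
    · simp [hh]
    · simp [hh, Ne.symm hh]
  rw [hcoeff]
  by_cases h0 : m = 0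
  · subst h0
    rw [if_pos rfl]
    rw [Finset.sum_eq_single (k+1)]
    · have hz : e (k+1) (k+1) = 0 := by
        have : ((e (k+1) (k+1) : ℤ)) = 0 := by rw [e_cast]; push_cast; ring
        exact_mod_cast this
      rw [if_pos hz]
      exact Even.neg_one_pow ⟨k+1, rfl⟩
    · intro j hj hne
      rw [if_neg]
      intro hcon
      apply hne
      have : ((j:ℤ) - (((k:ℕ)+1 : ℕ) : ℤ))^2 = 0 := by rw [← e_cast, hcon]; simp
      have := pow_eq_zero_iff (n := 2) (by omega) |>.mp this
      omega
    · intro hc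
      exact absurd (mem_range.mpr (by omega)) hc
  · rw [if_neg h0]
    by_cases hsq : IsSquare m
    · obtain ⟨s, hs⟩ := hsq
      rw [if_pos ⟨s, hs⟩]
      have hs0 : s ≠ 0 := by rintro rfl; simp at hs; exact h0 hs
      have hs1 : 1 ≤ s := by omega
      have hsk : s ≤ k := by nlinarith [hm, hs]
      have hsqrt : Nat.sqrt m = s := by rw [hs]; exact Nat.sqrt_eq s
      rw [hsqrt]
      have hsub : ({k+1 - s, k+1 + s} : Finset ℕ) ⊆ range (2*(k+1)+1) := by
        intro x hx
        simp only [Finset.mem_insert, Finset.mem_singleton] at hx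
        rcases hx with rfl | rfl <;> exact mem_range.mpr (by omega)
      rw [← Finset.sum_subset hsub ?_]
      · have hne : (k+1 - s) ∉ ({k+1+s} : Finset ℕ) := by
          simp only [Finset.mem_singleton]; omega
        rw [Finset.sum_insert hne, Finset.sum_singleton]
        have he1 : e (k+1-s) (k+1) = m := by
          have : ((e (k+1-s) (k+1) : ℤ)) = (m:ℤ) := by
            rw [e_cast, hs]; push_cast [show s ≤ k+1 by omega]; ring
          exact_mod_cast this
        have he2 : e (k+1+s) (k+1) = m := by
          have : ((e (k+1+s) (k+1) : ℤ)) = (m:ℤ) := by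
            rw [e_cast, hs]; push_cast; ring
          exact_mod_cast this
        rw [if_pos he1, if_pos he2]
        obtain ⟨t, ht⟩ : ∃ t, k+1 = s + t := ⟨k+1-s, by omega⟩
        rw [show k+1-s + (k+1) = 2*t + s by omega,
            show k+1+s + (k+1) = 2*(t+s) + s by omega]
        rw [pow_add, pow_mul, pow_add, pow_mul]
        norm_num
        ring
      · intro x hx hnx
        rw [if_neg]
        intro hcon
        apply hnx
        have hxe : ((x:ℤ) - (((k:ℕ)+1 : ℕ) : ℤ))^2 = ((s:ℤ))^2 := by
          rw [← e_cast, hcon, hs]; push_cast; ring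
        have hfac : (((x:ℤ) - (k+1)) - s) * (((x:ℤ) - (k+1)) + s) = 0 := by
          push_cast at hxe; linear_combination hxe
        rcases mul_eq_zero.mp hfac with h | h <;>
          simp only [Finset.mem_insert, Finset.mem_singleton] <;> omega
    · rw [if_neg hsq]
      refine Finset.sum_eq_zero (fun j hj => ?_)
      rw [if_neg]
      intro hcon
      apply hsq
      refine ⟨((j:ℤ) - (k+1)).natAbs, ?_⟩
      have : ((m:ℤ)) = (((j:ℤ) - (k+1)).natAbs : ℤ) * (((j:ℤ) - (k+1)).natAbs : ℤ) := by
        rw [← hcon, e_cast, ← sq, Int.natAbs_sq]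
        push_cast
        ring
      exact_mod_cast this


lemma L5 (k : ℕ) : X^(k+1) ∣ Th (k+1) -
    (PowerSeries.mk fun m : ℕ =>
      if m = 0 then (1 : ℤ) else if IsSquare m then 2 * (-1) ^ (Nat.sqrt m) else 0) := by
  rw [X_pow_dvd_iff]
  intro m hm
  rw [map_sub, coeff_mk, coeff_Th k m (by omega), sub_self]

lemma prod_split : ∀ M : ℕ,
    (∏ n ∈ range (2*M), (1 - X ^ (n+1) : PowerSeries ℤ)) = Od M * Ev M := by
  intro M
  induction M with
  | zero => simp [Od, Ev]
  | succ M ih =>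
      rw [show 2*(M+1) = (2*M+1)+1 by ring, prod_range_succ, prod_range_succ, ih,
        show Od (M+1) = Od M * (1 - X^(2*M+1)) from prod_range_succ _ _,
        show Ev (M+1) = Ev M * (1 - X^(2*(M+1))) from prod_range_succ _ _,
        show 2*M+1+1 = 2*(M+1) by ring]
      ring

lemma step1 (k : ℕ) : X^(k+1) ∣
    (∏ n ∈ range (2*(k+1)), (1 - X ^ (n+1) : PowerSeries ℤ) ^ 2)
      - ∏ n ∈ range (k+1), (1 - X ^ (n+1) : PowerSeries ℤ) ^ 2 := by
  rw [show 2*(k+1) = (k+1) + (k+1) by ring, Finset.prod_range_add]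
  have htail : X^(k+1) ∣ (∏ i ∈ range (k+1), (1 - X ^ ((k+1+i)+1) : PowerSeries ℤ) ^ 2) - 1 :=
    dvd_prod_sub_one (fun i _ => ⟨X^(i+1) * (X^(k+2+i) - 2), by ring⟩)
  obtain ⟨g, hg⟩ := htail
  exact ⟨(∏ n ∈ range (k+1), (1 - X ^ (n+1) : PowerSeries ℤ) ^ 2) * g,
    by linear_combination (∏ n ∈ range (k+1), (1 - X ^ (n+1) : PowerSeries ℤ) ^ 2) * hg⟩

theorem main (k : ℕ) :
    (PowerSeries.coeff (R := ℤ) k) (∏ n ∈ Finset.range (k + 1), (1 - X ^ (n + 1)) ^ 2) =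
      (PowerSeries.coeff (R := ℤ) k)
        ((PowerSeries.mk fun m : ℕ =>
            if m = 0 then (1 : ℤ)
            else if IsSquare m then 2 * (-1) ^ (Nat.sqrt m) else 0) *
          ∏ n ∈ Finset.range (k + 1), (1 - X ^ (2 * (n + 1)))) := by
  set f : PowerSeries ℤ := PowerSeries.mk fun m : ℕ =>
      if m = 0 then (1 : ℤ) else if IsSquare m then 2 * (-1) ^ (Nat.sqrt m) else 0 with hf
  have h2 : (∏ n ∈ range (2*(k+1)), (1 - X ^ (n+1) : PowerSeries ℤ) ^ 2)
      = Tser (k+1) * Ev (k+1) * Ev (k+1) := by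
    rw [Finset.prod_pow, prod_split, Tser_eq]
    ring
  have h4 := L4 k
  have h5 := L5 k
  have hRHS : (∏ n ∈ Finset.range (k + 1), (1 - X ^ (2 * (n + 1)) : PowerSeries ℤ)) = Ev (k+1) := rfl
  have hdvd : X^(k+1) ∣ (∏ n ∈ Finset.range (k + 1), (1 - X ^ (n+1) : PowerSeries ℤ) ^ 2)
      - f * ∏ n ∈ Finset.range (k + 1), (1 - X ^ (2 * (n + 1))) := by
    have hs1 := step1 k
    rw [h2] at hs1
    rw [hRHS]
    have hA : X^(k+1) ∣ Tser (k+1) * Ev (k+1) * Ev (k+1) - Th (k+1) * Ev (k+1) := by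
      obtain ⟨g, hg⟩ := h4
      exact ⟨g * Ev (k+1), by linear_combination Ev (k+1) * hg⟩
    have hB : X^(k+1) ∣ Th (k+1) * Ev (k+1) - f * Ev (k+1) := by
      obtain ⟨g, hg⟩ := h5
      exact ⟨g * Ev (k+1), by linear_combination Ev (k+1) * hg⟩
    have := dvd_add (dvd_sub hA hB) (dvd_sub (dvd_refl (X^(k+1))) (dvd_refl (X^(k+1))))
    obtain ⟨g1, hg1⟩ := hA
    obtain ⟨g2, hg2⟩ := hB
    obtain ⟨g3, hg3⟩ := hs1
    exact ⟨g1 + g2 - g3, by linear_combination hg1 + hg2 - hg3⟩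
  obtain ⟨g, hg⟩ := hdvd
  have : (coeff (R := ℤ) k) ((∏ n ∈ Finset.range (k + 1), (1 - X ^ (n+1) : PowerSeries ℤ) ^ 2)
      - f * ∏ n ∈ Finset.range (k + 1), (1 - X ^ (2 * (n + 1)))) = 0 := by
    rw [hg]
    rw [show (X:PowerSeries ℤ)^(k+1) * g = X^(k+1) * g from rfl]
    rw [PowerSeries.coeff_X_pow_mul']
    simp
  rw [map_sub, sub_eq_zero] at this
  exact this

end
end ThetaAux

/-- Gauss's identity underlying `θ₁(z) = η(z)²/η(2z)`: as formal power series,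
`∏_{n≥1}(1-qⁿ)² = (Σ_{n∈ℤ}(-1)ⁿ q^{n²}) · ∏_{n≥1}(1-q^{2n})`, stated
coefficientwise (the products are truncated at `k+1`, which does not affect the
coefficient of `q^k`).  The theta series has coefficient `1` at `k = 0`,
`2·(-1)^m` at `k = m²` with `m ≥ 1`, and `0` otherwise. -/
theorem theta_eta_quotient (k : ℕ) :
    (PowerSeries.coeff (R := ℤ) k) (∏ n ∈ Finset.range (k + 1), (1 - X ^ (n + 1)) ^ 2) =
      (PowerSeries.coeff (R := ℤ) k)
        ((PowerSeries.mk fun m : ℕ =>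
            if m = 0 then (1 : ℤ)
            else if IsSquare m then 2 * (-1) ^ (Nat.sqrt m) else 0) *
          ∏ n ∈ Finset.range (k + 1), (1 - X ^ (2 * (n + 1)))) :=
  ThetaAux.main k
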